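/- Let G be an additive subgroup of ℝ. Call an n-dimensional axis-parallel box good if at least one of its side lengths belongs to G. If a box is partitioned into finitely many good boxes, then the box itself is good. -/

import Mathlib

/-- An axis-parallel box in ℝⁿ with positive side lengths. -/
structure Box (n : ℕ) where
  lower : Fin n → ℝ
  upper : Fin n → ℝ
  lower_lt_upper : ∀ i, lower i < upper i

namespace Box

/-- The closed box as a subset of ℝⁿ. -/
def toSet {n : ℕ} (B : Box n) : Set (Fin n → ℝ) :=
  Set.univ.pi fun i => Set.Icc (B.lower i) (B.upper i)

/-- The open interior of the box. -/
def interiorSet {n : ℕ} (B : Box n) : Set (Fin n → ℝ) :=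
  Set.univ.pi fun i => Set.Ioo (B.lower i) (B.upper i)

/-- The side length of the box in direction `i`. -/
def side {n : ℕ} (B : Box n) (i : Fin n) : ℝ := B.upper i - B.lower i

end Box

/-- The boxes `t` form a finite partition (dissection) of `B`:
pairwise disjoint interiors, and their union covers `B`. -/
def IsDissection {n m : ℕ} (B : Box n) (t : Fin m → Box n) : Prop :=
  (∀ i j, i ≠ j → Disjoint (t i).interiorSet (t j).interiorSet) ∧
  (⋃ i, (t i).toSet) = B.toSet

/-- `P` is cut by a hyperplane parallel to a pair of its faces into `P₁` and `P₂`. -/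
def IsSplit {n : ℕ} (P P₁ P₂ : Box n) : Prop :=
  ∃ (j : Fin n) (c : ℝ), P.lower j < c ∧ c < P.upper j ∧
    P₁.lower = P.lower ∧ P₁.upper = Function.update P.upper j c ∧
    P₂.lower = Function.update P.lower j c ∧ P₂.upper = P.upper

/-!
Suppose no side of `B` lies in `G`, and let `φⱼ` be the indicator function of the coset
`B.lower j + G`. The function `J ↦ ∏ⱼ (φⱼ (J.upper j) - φⱼ (J.lower j))` is additive under
splitting a box by a hyperplane, hence under arbitrary partitions. It vanishes on every good box,
whose two endpoints in a direction with side in `G` lie in the same coset, but it equals `±1`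
on `B`, whose endpoints never do.

To apply box additivity, the closed boxes with disjoint interiors are replaced by the half-open
boxes `∏ (lⱼ, uⱼ]`, which form a genuine partition of `B`: points near a common point of two of
them lie in both interiors, and the points `x - ε` for small `ε > 0` witness that the half-open
boxes still cover.
-/

open Filter Topology

namespace BoxIntegral.Box

variable {ι : Type*} {I J : Box ι} {x : ι → ℝ}

theorem nonempty_Ioo_inter_of_mem (hI : x ∈ I) (hJ : x ∈ J) :
    (Box.Ioo I ∩ Box.Ioo J).Nonempty := by
  have hmax : ∀ k, max (I.lower k) (J.lower k) < x k := fun k => max_lt (hI k).1 (hJ k).1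
  have hz : ∀ K : Box ι, x ∈ K → (∀ k, K.lower k ≤ max (I.lower k) (J.lower k)) →
      (fun k => (max (I.lower k) (J.lower k) + x k) / 2) ∈ Box.Ioo K := fun K hK hle k _ =>
    ⟨by dsimp only; linarith [hle k, hmax k], by dsimp only; linarith [hmax k, (hK k).2]⟩
  exact ⟨_, hz I hI fun _ => le_max_left _ _, hz J hJ fun _ => le_max_right _ _⟩

theorem disjoint_coe_of_disjoint_Ioo (h : Disjoint (Box.Ioo I) (Box.Ioo J)) :
    Disjoint (I : Set (ι → ℝ)) J :=
  Set.disjoint_left.2 fun _ hI hJ =>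
    Set.not_disjoint_iff_nonempty_inter.2 (nonempty_Ioo_inter_of_mem hI hJ) h

theorem eventually_sub_const_mem_Icc [Finite ι] (hx : x ∈ I) :
    ∀ᶠ ε in 𝓝[>] (0 : ℝ), x - Function.const ι ε ∈ Box.Icc I := by
  have hpos : ∀ᶠ ε in 𝓝[>] (0 : ℝ), 0 < ε := self_mem_nhdsWithin
  have hsmall : ∀ k, ∀ᶠ ε in 𝓝[>] (0 : ℝ), ε < x k - I.lower k := fun k =>
    nhdsWithin_le_nhds (gt_mem_nhds (sub_pos.2 (hx k).1))
  filter_upwards [hpos, eventually_all.2 hsmall] with ε hε hεk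
  exact ⟨fun k => by simpa using (lt_sub_comm.1 (hεk k)).le,
    fun k => by simpa using (sub_le_self _ hε.le).trans (hx k).2⟩

theorem mem_of_frequently_sub_const_mem_Icc
    (h : ∃ᶠ ε in 𝓝[>] (0 : ℝ), x - Function.const ι ε ∈ Box.Icc I) : x ∈ I := by
  have hx : x ∈ Box.Icc I := by
    have hS : IsClosed {ε : ℝ | x - Function.const ι ε ∈ Box.Icc I} :=
      isClosed_Icc.preimage (by fun_prop)
    simpa using hS.mem_of_frequently_of_tendsto (h.filter_mono nhdsWithin_le_nhds) tendsto_id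
  obtain ⟨ε, hxε, hε⟩ := (h.and_eventually self_mem_nhdsWithin).exists
  exact fun k => ⟨(hxε.1 k).trans_lt (by simpa using hε), hx.2 k⟩

end BoxIntegral.Box

namespace BoxIntegral.BoxAdditiveMap

variable {ι R : Type*} [Fintype ι] [CommRing R]

def prodIncrement (f : ι → ℝ → R) : BoxAdditiveMap ι R ⊤ :=
  ofMapSplitAdd (fun J => ∏ j, (f j (J.upper j) - f j (J.lower j))) ⊤ fun I _ i x hx => by
    classical
    have hprod : ∀ g : ι → R, ∏ j, g j = g i * ∏ j ∈ Finset.univ.erase i, g j := fun g =>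
      (Finset.mul_prod_erase _ g (Finset.mem_univ i)).symm
    have hrest : ∀ (g : ι → ℝ → R) (a : ι → ℝ),
        ∏ j ∈ Finset.univ.erase i, g j (Function.update a i x j) =
          ∏ j ∈ Finset.univ.erase i, g j (a j) :=
      fun g a => Finset.prod_congr rfl fun j hj => by
        rw [Function.update_of_ne (Finset.ne_of_mem_erase hj)]
    rw [Box.splitLower_def hx, Box.splitUpper_def hx]
    change (∏ j, _) + (∏ j, _) = _
    rw [hprod, hprod, hprod]
    simp only [Function.update_self, hrest (fun j y => f j y - f j (I.lower j)),
      hrest (fun j y => f j (I.upper j) - f j y)]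
    ring

@[simp]
theorem prodIncrement_apply (f : ι → ℝ → R) (J : Box ι) :
    prodIncrement f J = ∏ j, (f j (J.upper j) - f j (J.lower j)) :=
  rfl

end BoxIntegral.BoxAdditiveMap

namespace Box

variable {n : ℕ}

def toBoxIntegral (B : Box n) : BoxIntegral.Box (Fin n) :=
  ⟨B.lower, B.upper, B.lower_lt_upper⟩

theorem Icc_toBoxIntegral (B : Box n) : BoxIntegral.Box.Icc B.toBoxIntegral = B.toSet :=
  (Set.pi_univ_Icc _ _).symm

end Box

theorem IsDissection.exists_isPartition {n m : ℕ} {B : Box n} {t : Fin m → Box n}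
    (ht : IsDissection B t) :
    ∃ π : BoxIntegral.Prepartition B.toBoxIntegral,
      π.IsPartition ∧ ∀ J ∈ π, ∃ i, J = (t i).toBoxIntegral := by
  classical
  have hle : ∀ i, (t i).toBoxIntegral ≤ B.toBoxIntegral := fun i => by
    rw [BoxIntegral.Box.le_iff_Icc, Box.Icc_toBoxIntegral, Box.Icc_toBoxIntegral, ← ht.2]
    exact Set.subset_iUnion (fun i => (t i).toSet) i
  refine ⟨⟨Finset.univ.image fun i => (t i).toBoxIntegral, ?_, ?_⟩, ?_, ?_⟩
  · simpa using hle
  · simp only [Finset.coe_image, Finset.coe_univ, Set.image_univ]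
    rintro _ ⟨i, rfl⟩ _ ⟨j, rfl⟩ hij
    exact BoxIntegral.Box.disjoint_coe_of_disjoint_Ioo (ht.1 i j fun h => hij (h ▸ rfl))
  · intro x hx
    have hcov := BoxIntegral.Box.eventually_sub_const_mem_Icc hx
    rw [Box.Icc_toBoxIntegral, ← ht.2] at hcov
    obtain ⟨i, hi⟩ := frequently_exists.1 (hcov.mono fun _ => Set.mem_iUnion.1).frequently
    rw [← Box.Icc_toBoxIntegral] at hi
    exact ⟨_, Finset.mem_image_of_mem _ (Finset.mem_univ i),
      BoxIntegral.Box.mem_of_frequently_sub_const_mem_Icc hi⟩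
  · simp [BoxIntegral.Prepartition.mem_mk, eq_comm]

open BoxIntegral.BoxAdditiveMap (prodIncrement prodIncrement_apply)

/-- If a box is partitioned into boxes each having a side length in the additive
subgroup `G`, then the box itself has a side length in `G`. -/
theorem good_box_theorem (n : ℕ) (G : AddSubgroup ℝ) (B : Box n)
    (m : ℕ) (t : Fin m → Box n) (ht : IsDissection B t)
    (hgood : ∀ i, ∃ j, (t i).side j ∈ G) :
    ∃ j, B.side j ∈ G := by
  classical
  by_contra! hB
  obtain ⟨π, hπ, hπt⟩ := ht.exists_isPartition
  let φ : Fin n → ℝ → ℤ := fun j x => if (x : ℝ ⧸ G) = B.lower j then 1 else 0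
  have hsmall : ∀ J ∈ π, prodIncrement φ J = 0 := by
    intro J hJ
    obtain ⟨i, rfl⟩ := hπt J hJ
    obtain ⟨j, hj⟩ := hgood i
    have hcoset : ((t i).upper j : ℝ ⧸ G) = (t i).lower j :=
      QuotientAddGroup.eq_iff_sub_mem.2 hj
    exact Finset.prod_eq_zero (Finset.mem_univ j) (by simp [φ, Box.toBoxIntegral, hcoset])
  have hbig : prodIncrement φ B.toBoxIntegral ≠ 0 := by
    rw [prodIncrement_apply]
    refine Finset.prod_ne_zero_iff.2 fun j _ => ?_
    have hcoset : (B.upper j : ℝ ⧸ G) ≠ B.lower j :=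
      fun h => hB j (QuotientAddGroup.eq_iff_sub_mem.1 h)
    simp [φ, Box.toBoxIntegral, hcoset]
  rw [← (prodIncrement φ).sum_partition_boxes le_top hπ] at hbig
  exact hbig (Finset.sum_eq_zero hsmall)
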